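/- Let n ≥ 1, let A be an IFM of order n, let λ ∈ [0,1] and let p ≥ 1 be a real number. Then for every m ≥ 1 and all r, s, j, the entries in column j of the m-th maxgeneralized mean–mingeneralized mean power of A satisfy |(A^m)μ r j − (A^m)μ s j| ≤ λ^((m−1)/p) and |(A^m)ν r j − (A^m)ν s j| ≤ λ^((m−1)/p). -/

import Mathlib

open Filter Topology

/-- `A` (given by membership part `Amu` and non-membership part `Anu`) is an
intuitionistic fuzzy matrix. -/
def IsIFM (n : ℕ) (Amu Anu : Fin n → Fin n → ℝ) : Prop :=
  ∀ i j, 0 ≤ Amu i j ∧ 0 ≤ Anu i j ∧ Amu i j + Anu i j ≤ 1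

/-- Powers of an IFM under the maxgeneralized mean–mingeneralized mean operation
with parameters `lam` and exponent `p`:
`A^1 = A` and `A^(k+1) = A^k ∘ A`, where
`(X ∘ A)μ i j = max_t (lam·(Xμ i t)^p + (1-lam)·(Aμ t j)^p)^(1/p)` and
`(X ∘ A)ν i j = min_t (lam·(Xν i t)^p + (1-lam)·(Aν t j)^p)^(1/p)`.
(The value at `0` is irrelevant; it is set to `A`.) -/
noncomputable def gmPow (n : ℕ) (lam p : ℝ) (Amu Anu : Fin n → Fin n → ℝ) :
    ℕ → (Fin n → Fin n → ℝ) × (Fin n → Fin n → ℝ)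
  | 0 => (Amu, Anu)
  | 1 => (Amu, Anu)
  | m + 2 =>
    let X := gmPow n lam p Amu Anu (m + 1)
    (fun i j => ⨆ t : Fin n, (lam * X.1 i t ^ p + (1 - lam) * Amu t j ^ p) ^ (1 / p),
     fun i j => ⨅ t : Fin n, (lam * X.2 i t ^ p + (1 - lam) * Anu t j ^ p) ^ (1 / p))

/-!
With `q = lam ^ (1 / p)` and `c ≥ 0`, the map `x ↦ (lam * x ^ p + c) ^ (1 / p)` is the `ℓᵖ` norm
of `(q * x, c ^ (1 / p))`, so Minkowski's inequality makes it `q`-Lipschitz on `[0, ∞)`. A uniform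
bound on differences survives taking a max or a min over `t`, hence the oscillation of a column of
`A ^ (k + 1)` is at most `q` times that of `A ^ k`. Entries of `A` lie in `[0, 1]`, so the
oscillation of a column of `A ^ m` is at most `q ^ (m - 1) = lam ^ ((m - 1) / p)`.
-/

lemma rpow_mul_rpow_add_le {lam p c x y : ℝ} (hlam : 0 ≤ lam) (hp : 1 ≤ p) (hc : 0 ≤ c)
    (hx : 0 ≤ x) (hy : 0 ≤ y) :
    (lam * x ^ p + c) ^ (1 / p) ≤ (lam * y ^ p + c) ^ (1 / p) + lam ^ (1 / p) * |x - y| := by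
  have hp0 : p ≠ 0 := by positivity
  have hscale : ∀ z : ℝ, |lam ^ (1 / p) * z| ^ p = lam * |z| ^ p := by
    intro z
    rw [abs_mul, Real.mul_rpow (abs_nonneg _) (abs_nonneg _),
      abs_of_nonneg (Real.rpow_nonneg hlam _), one_div, Real.rpow_inv_rpow hlam hp0]
  have hcp : |c ^ (1 / p)| ^ p = c := by
    rw [abs_of_nonneg (Real.rpow_nonneg hc _), one_div, Real.rpow_inv_rpow hc hp0]
  -- Minkowski for `(q * y, c ^ (1 / p)) + (q * (x - y), 0)`, where `q = lam ^ (1 / p)`.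
  have minkowski := Real.Lp_add_le Finset.univ ![lam ^ (1 / p) * y, c ^ (1 / p)]
    ![lam ^ (1 / p) * (x - y), 0] hp
  simp only [Fin.sum_univ_two, Matrix.cons_val_zero, Matrix.cons_val_one, add_zero, abs_zero,
    Real.zero_rpow hp0, ← mul_add, add_sub_cancel, hscale, hcp, abs_of_nonneg hx,
    abs_of_nonneg hy] at minkowski
  rwa [Real.mul_rpow hlam (by positivity), one_div, Real.rpow_rpow_inv (abs_nonneg _) hp0,
    ← one_div] at minkowski

lemma abs_rpow_mul_rpow_add_sub_le {lam p c x y : ℝ} (hlam : 0 ≤ lam) (hp : 1 ≤ p) (hc : 0 ≤ c)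
    (hx : 0 ≤ x) (hy : 0 ≤ y) :
    |(lam * x ^ p + c) ^ (1 / p) - (lam * y ^ p + c) ^ (1 / p)| ≤ lam ^ (1 / p) * |x - y| := by
  rw [abs_sub_le_iff, sub_le_iff_le_add', sub_le_iff_le_add']
  exact ⟨rpow_mul_rpow_add_le hlam hp hc hx hy,
    abs_sub_comm x y ▸ rpow_mul_rpow_add_le hlam hp hc hy hx⟩

section

variable {ι : Type*} [Finite ι] [Nonempty ι] {F G : ι → ℝ} {d : ℝ}

lemma ciSup_le_ciSup_add (h : ∀ t, F t ≤ G t + d) : ⨆ t, F t ≤ (⨆ t, G t) + d :=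
  ciSup_le fun t => (h t).trans (add_le_add_left (le_ciSup (Set.finite_range G).bddAbove t) d)

lemma ciInf_le_ciInf_add (h : ∀ t, F t ≤ G t + d) : ⨅ t, F t ≤ (⨅ t, G t) + d :=
  sub_le_iff_le_add.1 <| le_ciInf fun t => sub_le_iff_le_add.2 <|
    (ciInf_le (Set.finite_range F).bddBelow t).trans (h t)

lemma abs_ciSup_sub_ciSup_le (h : ∀ t, |F t - G t| ≤ d) : |(⨆ t, F t) - ⨆ t, G t| ≤ d := by
  simp only [abs_sub_le_iff, sub_le_iff_le_add'] at h ⊢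
  exact ⟨ciSup_le_ciSup_add fun t => (h t).1, ciSup_le_ciSup_add fun t => (h t).2⟩

lemma abs_ciInf_sub_ciInf_le (h : ∀ t, |F t - G t| ≤ d) : |(⨅ t, F t) - ⨅ t, G t| ≤ d := by
  simp only [abs_sub_le_iff, sub_le_iff_le_add'] at h ⊢
  exact ⟨ciInf_le_ciInf_add fun t => (h t).1, ciInf_le_ciInf_add fun t => (h t).2⟩

end

section

variable {n : ℕ} {lam p : ℝ} {Amu Anu : Fin n → Fin n → ℝ}

lemma gmPow_nonneg (hA : IsIFM n Amu Anu) (hlam : lam ∈ Set.Icc (0 : ℝ) 1) :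
    ∀ k i j, 0 ≤ (gmPow n lam p Amu Anu k).1 i j ∧ 0 ≤ (gmPow n lam p Amu Anu k).2 i j
  | 0, i, j | 1, i, j => ⟨(hA i j).1, (hA i j).2.1⟩
  | k + 2, i, j => by
    have hmean : ∀ {x y : ℝ}, 0 ≤ x → 0 ≤ y → 0 ≤ (lam * x ^ p + (1 - lam) * y ^ p) ^ (1 / p) :=
      fun hx hy => Real.rpow_nonneg (add_nonneg
        (mul_nonneg hlam.1 (Real.rpow_nonneg hx _))
        (mul_nonneg (sub_nonneg.2 hlam.2) (Real.rpow_nonneg hy _))) _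
    exact ⟨Real.iSup_nonneg fun t => hmean (gmPow_nonneg hA hlam (k + 1) i t).1 (hA t j).1,
      Real.iInf_nonneg fun t => hmean (gmPow_nonneg hA hlam (k + 1) i t).2 (hA t j).2.1⟩

lemma gmPow_succ_column_close (hA : IsIFM n Amu Anu) (hlam : lam ∈ Set.Icc (0 : ℝ) 1)
    (hp : 1 ≤ p) (k : ℕ) (r s j : Fin n) :
    |(gmPow n lam p Amu Anu (k + 1)).1 r j - (gmPow n lam p Amu Anu (k + 1)).1 s j| ≤
        (lam ^ (1 / p)) ^ k ∧
      |(gmPow n lam p Amu Anu (k + 1)).2 r j - (gmPow n lam p Amu Anu (k + 1)).2 s j| ≤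
        (lam ^ (1 / p)) ^ k := by
  induction k generalizing j with
  | zero =>
    obtain ⟨hr₁, hr₂, hr⟩ := hA r j
    obtain ⟨hs₁, hs₂, hs⟩ := hA s j
    show |Amu r j - Amu s j| ≤ _ ^ 0 ∧ |Anu r j - Anu s j| ≤ _ ^ 0
    rw [pow_zero]
    exact ⟨abs_sub_le_of_nonneg_of_le hr₁ (by linarith) hs₁ (by linarith),
      abs_sub_le_of_nonneg_of_le hr₂ (by linarith) hs₂ (by linarith)⟩
  | succ k ih =>
    have : Nonempty (Fin n) := ⟨r⟩
    have hstep : ∀ {x y a : ℝ}, 0 ≤ x → 0 ≤ y → 0 ≤ a → |x - y| ≤ (lam ^ (1 / p)) ^ k →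
        |(lam * x ^ p + (1 - lam) * a ^ p) ^ (1 / p) - (lam * y ^ p + (1 - lam) * a ^ p) ^ (1 / p)|
          ≤ (lam ^ (1 / p)) ^ (k + 1) := by
      intro x y a hx hy ha hxy
      calc _ ≤ lam ^ (1 / p) * |x - y| := abs_rpow_mul_rpow_add_sub_le hlam.1 hp
              (mul_nonneg (sub_nonneg.2 hlam.2) (Real.rpow_nonneg ha _)) hx hy
        _ ≤ lam ^ (1 / p) * (lam ^ (1 / p)) ^ k :=
          mul_le_mul_of_nonneg_left hxy (Real.rpow_nonneg hlam.1 _)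
        _ = (lam ^ (1 / p)) ^ (k + 1) := (pow_succ' _ _).symm
    have hX := gmPow_nonneg (p := p) hA hlam (k + 1)
    simp only [gmPow]
    exact ⟨abs_ciSup_sub_ciSup_le fun t =>
        hstep (hX r t).1 (hX s t).1 (hA t j).1 (ih t).1,
      abs_ciInf_sub_ciInf_le fun t => hstep (hX r t).2 (hX s t).2 (hA t j).2.1 (ih t).2⟩

end

theorem gmPow_column_close (n : ℕ) (Amu Anu : Fin n → Fin n → ℝ)
    (hA : IsIFM n Amu Anu) (lam p : ℝ) (hlam : lam ∈ Set.Icc (0 : ℝ) 1) (hp : 1 ≤ p)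
    (m : ℕ) (hm : 1 ≤ m) (r s j : Fin n) :
    |(gmPow n lam p Amu Anu m).1 r j - (gmPow n lam p Amu Anu m).1 s j| ≤
        lam ^ (((m : ℝ) - 1) / p) ∧
      |(gmPow n lam p Amu Anu m).2 r j - (gmPow n lam p Amu Anu m).2 s j| ≤
        lam ^ (((m : ℝ) - 1) / p) := by
  obtain ⟨k, rfl⟩ := Nat.exists_eq_add_of_le' hm
  have hexp : lam ^ ((((k + 1 : ℕ) : ℝ) - 1) / p) = (lam ^ (1 / p)) ^ k := by
    rw [← Real.rpow_mul_natCast hlam.1]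
    push_cast
    ring_nf
  rw [hexp]
  exact gmPow_succ_column_close hA hlam hp k r s j
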